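/- Let X be a nonempty finite type, T ≥ 1, r : X → ℝ, α > 0, and p^pre a positive pretrained policy sequence with soft value functions v_t and soft-optimal policy sequence p*. Fix an initial distribution μ on X and define, for any policy sequence q, J(q) := E_{P^q_μ}[r(x_0)] − α · Σ_{t=1}^{T} E_{P^q_μ}[KL(q_{t-1}(·|x_t) ‖ p^pre_{t-1}(·|x_t))]. Then for every policy sequence q, J(q) ≤ Σ_{x_T} μ(x_T) v_T(x_T), and the soft-optimal policy sequence attains this bound: J(p*) = Σ_{x_T} μ(x_T) v_T(x_T). In particular, p* maximizes the entropy-regularized objective J over all policy sequences. -/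

import Mathlib

open Real

/-- KL divergence between two mass functions on a finite type, with the
convention `0 * log 0 = 0` (automatic, since `0 * _ = 0` in `ℝ`). -/
noncomputable def KLd {Y : Type*} [Fintype Y] (p q : Y → ℝ) : ℝ :=
  ∑ y, p y * Real.log (p y / q y)

/-- Product of transition probabilities along a trajectory `(x_{t-1}, …, x_0)`
(encoded as `y : Fin t → X`, with `y i = x_i`) starting from `x_t = x`:
`∏_{s=t}^{1} p_{s-1}(x_{s-1} | x_s)`. -/
noncomputable def chainProd {X : Type*} (p : ℕ → X → X → ℝ) (t : ℕ) (x : X)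
    (y : Fin t → X) : ℝ :=
  ∏ s : Fin t, p s (if h : (s : ℕ) + 1 < t then y ⟨(s : ℕ) + 1, h⟩ else x) (y s)

/-- The soft value functions: `v_0 = r` and, for `t ≥ 1`,
`v_t(x) = α * log ∑_{x_{t-1},…,x_0} (∏_{s=t}^{1} p_{s-1}(x_{s-1}|x_s)) exp(r(x_0)/α)`. -/
noncomputable def softValue {X : Type*} [Fintype X] (p : ℕ → X → X → ℝ) (r : X → ℝ)
    (α : ℝ) : ℕ → X → ℝ
  | 0, x => r x
  | (t + 1), x =>
      α * Real.log (∑ y : Fin (t + 1) → X,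
        chainProd p (t + 1) x y * Real.exp (r (y 0) / α))

/-- The soft-optimal policy
`p*_{t-1}(y|x) = p^pre_{t-1}(y|x) * exp(v_{t-1}(y)/α) / exp(v_t(x)/α)`.
The index `t : ℕ` here stands for `t-1`, so it uses `v_t` and `v_{t+1}`. -/
noncomputable def softOpt {X : Type*} [Fintype X] (p : ℕ → X → X → ℝ) (r : X → ℝ)
    (α : ℝ) (t : ℕ) (x y : X) : ℝ :=
  p t x y * Real.exp (softValue p r α t y / α) / Real.exp (softValue p r α (t + 1) x / α)

/-- The joint trajectory distribution
`P^q_μ(x_T,…,x_0) = μ(x_T) * ∏_{t=T}^{1} q_{t-1}(x_{t-1}|x_t)`, a trajectory being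
encoded as `x : Fin (T+1) → X` with `x i = x_i` (so `x (Fin.last T) = x_T`). -/
noncomputable def trajProb {X : Type*} (μ : X → ℝ) (q : ℕ → X → X → ℝ) (T : ℕ)
    (x : Fin (T + 1) → X) : ℝ :=
  μ (x (Fin.last T)) * ∏ t : Fin T, q t (x t.succ) (x t.castSucc)

/-- Expectation of `f` under the joint trajectory distribution `P^q_μ`. -/
noncomputable def trajExp {X : Type*} [Fintype X] (μ : X → ℝ) (q : ℕ → X → X → ℝ)
    (T : ℕ) (f : (Fin (T + 1) → X) → ℝ) : ℝ :=
  ∑ x : Fin (T + 1) → X, trajProb μ q T x * f x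

/-- `q` is a policy sequence for horizon `T`: for each `t < T` (our index `t`
stands for `t-1` with `1 ≤ t ≤ T`), `q t x ·` is a probability mass function. -/
def IsPolicy {X : Type*} [Fintype X] (T : ℕ) (q : ℕ → X → X → ℝ) : Prop :=
  ∀ t < T, ∀ x : X, (∀ y : X, 0 ≤ q t x y) ∧ (∑ y, q t x y) = 1

/-- A policy sequence is positive if all its transition probabilities are positive. -/
def IsPositive {X : Type*} (T : ℕ) (q : ℕ → X → X → ℝ) : Prop :=
  ∀ t < T, ∀ x y : X, 0 < q t x y

/-- The entropy-regularized objective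
`J(q) = E_{P^q_μ}[r(x_0)] − α ∑_{t=1}^T E_{P^q_μ}[KL(q_{t-1}(·|x_t) ‖ p^pre_{t-1}(·|x_t))]`. -/
noncomputable def Jobj {X : Type*} [Fintype X] (T : ℕ) (μ : X → ℝ)
    (ppre : ℕ → X → X → ℝ) (r : X → ℝ) (α : ℝ) (q : ℕ → X → X → ℝ) : ℝ :=
  trajExp μ q T (fun x => r (x 0))
    - α * ∑ t : Fin T, trajExp μ q T (fun x =>
        KLd (fun y => q t (x t.succ) y) (fun y => ppre t (x t.succ) y))

/-!
Gibbs variational principle, applied backwards in time. The soft values satisfy the Bellman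
recursion `exp (v_{t+1} x / α) = ∑ y, p^pre_t(y|x) exp (v_t y / α)`, so `p*_t(·|x)` is the
`exp (v_t / α)`-tilt of `p^pre_t(·|x)` and is a policy. For any mass function `q` on `X`,
`E_q[v_t] - α KL(q ‖ p^pre_t(·|x)) = v_{t+1} x - α KL(q ‖ p*_t(·|x))`. Conditioning on the first
transition `x_T → x_{T-1}` and inducting on `T` gives
`J(q) = ∑ μ v_T - α ∑_t E[KL(q_t ‖ p*_t)]`, and Gibbs' inequality finishes: the remainder is
nonnegative, and vanishes for `q = p*`.
-/

open InformationTheory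

theorem IsPolicy.mono {X : Type*} [Fintype X] {T S : ℕ} {q : ℕ → X → X → ℝ}
    (hq : IsPolicy T q) (h : S ≤ T) : IsPolicy S q :=
  fun t ht => hq t (ht.trans_le h)

theorem IsPositive.mono {X : Type*} {T S : ℕ} {q : ℕ → X → X → ℝ} (hq : IsPositive T q)
    (h : S ≤ T) : IsPositive S q :=
  fun t ht => hq t (ht.trans_le h)

theorem trajProb_snoc {X : Type*} (μ : X → ℝ) (q : ℕ → X → X → ℝ) (S : ℕ) (y : Fin (S + 1) → X)
    (z : X) :
    trajProb μ q (S + 1) (Fin.snoc y z) = μ z * trajProb (q S z) q S y := by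
  simp only [trajProb, Fin.prod_univ_castSucc, Fin.snoc_last, Fin.succ_last, Fin.succ_castSucc,
    Fin.snoc_castSucc, Fin.val_last, Fin.val_castSucc]
  ring

section Trajectory

variable {X : Type*} [Fintype X]

theorem sum_pi_fin_succ_eq_sum_snoc {M : Type*} [AddCommMonoid M] {n : ℕ}
    (f : (Fin (n + 1) → X) → M) :
    ∑ x : Fin (n + 1) → X, f x = ∑ z : X, ∑ y : Fin n → X, f (Fin.snoc y z) := by
  rw [← (Fin.snocEquiv fun _ => X).sum_comp, Fintype.sum_prod_type]
  rfl

def pushKernel (μ : X → ℝ) (k : X → X → ℝ) (w : X) : ℝ :=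
  ∑ z, μ z * k z w

theorem sum_pushKernel_mul (μ : X → ℝ) (k : X → X → ℝ) (f : X → ℝ) :
    ∑ w, pushKernel μ k w * f w = ∑ z, μ z * ∑ w, k z w * f w := by
  simp only [pushKernel, Finset.sum_mul, Finset.mul_sum, mul_assoc]
  exact Finset.sum_comm

theorem sum_pushKernel {μ : X → ℝ} {k : X → X → ℝ} (hk : ∀ z, ∑ w, k z w = 1) :
    ∑ w, pushKernel μ k w = ∑ z, μ z := by
  simpa [hk] using sum_pushKernel_mul μ k 1

theorem trajExp_zero (μ : X → ℝ) (q : ℕ → X → X → ℝ) (f : (Fin 1 → X) → ℝ) :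
    trajExp μ q 0 f = ∑ x, μ x * f (fun _ => x) := by
  simp [trajExp, trajProb, sum_pi_fin_succ_eq_sum_snoc, Fin.snoc_zero]

theorem trajExp_succ (μ : X → ℝ) (q : ℕ → X → X → ℝ) (S : ℕ) (f : (Fin (S + 2) → X) → ℝ) :
    trajExp μ q (S + 1) f = ∑ z, μ z * trajExp (q S z) q S (fun y => f (Fin.snoc y z)) := by
  simp only [trajExp, sum_pi_fin_succ_eq_sum_snoc (n := S + 1), trajProb_snoc, Finset.mul_sum,
    mul_assoc]

theorem trajExp_pushKernel (μ : X → ℝ) (k : X → X → ℝ) (q : ℕ → X → X → ℝ) (T : ℕ)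
    (g : (Fin (T + 1) → X) → ℝ) :
    trajExp (pushKernel μ k) q T g = ∑ z, μ z * trajExp (k z) q T g := by
  simp only [trajExp, trajProb, pushKernel, Finset.sum_mul, Finset.mul_sum, mul_assoc]
  exact Finset.sum_comm

theorem trajExp_succ_of_snoc_eq {μ : X → ℝ} {q : ℕ → X → X → ℝ} {S : ℕ}
    {f : (Fin (S + 2) → X) → ℝ} {g : (Fin (S + 1) → X) → ℝ}
    (h : ∀ y z, f (Fin.snoc y z) = g y) :
    trajExp μ q (S + 1) f = trajExp (pushKernel μ (q S)) q S g := by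
  simp only [trajExp_succ, h, trajExp_pushKernel]

theorem trajExp_const {μ : X → ℝ} {q : ℕ → X → X → ℝ} {T : ℕ} (hq : IsPolicy T q) (c : ℝ) :
    trajExp μ q T (fun _ => c) = (∑ x, μ x) * c := by
  induction T generalizing μ with
  | zero => rw [trajExp_zero, Finset.sum_mul]
  | succ S ih =>
    rw [trajExp_succ_of_snoc_eq (g := fun _ => c) fun _ _ => rfl, ih (hq.mono S.le_succ),
      sum_pushKernel fun z => (hq S S.lt_succ_self z).2]

theorem trajExp_succ_eq_sum_of_snoc_eq {μ : X → ℝ} {q : ℕ → X → X → ℝ} {S : ℕ}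
    (hq : IsPolicy (S + 1) q) {f : (Fin (S + 2) → X) → ℝ} {g : X → ℝ}
    (h : ∀ y z, f (Fin.snoc y z) = g z) :
    trajExp μ q (S + 1) f = ∑ z, μ z * g z := by
  simp only [trajExp_succ, h, trajExp_const (hq.mono S.le_succ), (hq S S.lt_succ_self _).2,
    one_mul]

theorem trajExp_nonneg {μ : X → ℝ} {q : ℕ → X → X → ℝ} {T : ℕ} (hμ : ∀ x, 0 ≤ μ x)
    (hq : IsPolicy T q) {f : (Fin (T + 1) → X) → ℝ} (hf : ∀ x, 0 ≤ f x) :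
    0 ≤ trajExp μ q T f :=
  Finset.sum_nonneg fun x _ => mul_nonneg
    (mul_nonneg (hμ _) (Finset.prod_nonneg fun t _ => (hq t t.isLt _).1 _)) (hf x)

end Trajectory

section KL

variable {Y : Type*} [Fintype Y]

theorem sub_le_mul_log_div {p s : ℝ} (hp : 0 ≤ p) (hs : 0 < s) :
    p - s ≤ p * log (p / s) := by
  have h := mul_nonneg hs.le (klFun_nonneg (div_nonneg hp hs.le))
  have hexp : s * klFun (p / s) = p * log (p / s) + s - p := by
    rw [klFun_apply]; field_simp
  linarith

theorem KLd_nonneg {p s : Y → ℝ} (hp : ∀ y, 0 ≤ p y) (hs : ∀ y, 0 < s y)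
    (hsp : ∑ y, s y ≤ ∑ y, p y) : 0 ≤ KLd p s := by
  have h := Finset.sum_le_sum fun y (_ : y ∈ Finset.univ) => sub_le_mul_log_div (hp y) (hs y)
  rw [Finset.sum_sub_distrib] at h
  exact (sub_nonneg.mpr hsp).trans h

theorem KLd_self {p : Y → ℝ} (hp : ∀ y, 0 < p y) : KLd p p = 0 :=
  Finset.sum_eq_zero fun y _ => by rw [div_self (hp y).ne', log_one, mul_zero]

theorem sum_mul_sub_KLd_eq_sub_KLd_tilt {α : ℝ} (hα : α ≠ 0) {p q : Y → ℝ}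
    (hp : ∀ y, 0 < p y) (hq : ∀ y, 0 ≤ q y) (hq1 : ∑ y, q y = 1) (v : Y → ℝ) (c : ℝ) :
    ∑ y, q y * v y - α * KLd q p
      = c - α * KLd q (fun y => p y * exp (v y / α) / exp (c / α)) := by
  have hterm : ∀ y, q y * log (q y / (p y * exp (v y / α) / exp (c / α)))
      = q y * log (q y / p y) + q y * (c / α) - q y * v y / α := by
    intro y
    rcases (hq y).eq_or_lt with h | h
    · simp [← h]
    have hdiv : q y / (p y * exp (v y / α) / exp (c / α))
        = q y / p y * exp (c / α - v y / α) := by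
      rw [exp_sub]; field_simp
    rw [hdiv, log_mul (div_pos h (hp y)).ne' (exp_pos _).ne', log_exp]
    ring
  have hKL : KLd q (fun y => p y * exp (v y / α) / exp (c / α))
      = KLd q p + c / α - (∑ y, q y * v y) / α := by
    simp only [KLd, hterm, Finset.sum_add_distrib, Finset.sum_sub_distrib, ← Finset.sum_mul,
      hq1, one_mul, Finset.sum_div]
  rw [hKL]
  field_simp
  ring

end KL

theorem chainProd_snoc {X : Type*} (p : ℕ → X → X → ℝ) (t : ℕ) (x z : X) (y : Fin t → X) :
    chainProd p (t + 1) x (Fin.snoc y z) = p t x z * chainProd p t z y := by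
  rw [chainProd, chainProd, Fin.prod_univ_castSucc, mul_comm, dif_neg (by simp), Fin.snoc_last]
  congr 1
  refine Finset.prod_congr rfl fun s _ => ?_
  rw [dif_pos (by simp), Fin.snoc_castSucc]
  by_cases hs : (s : ℕ) + 1 < t
  · rw [dif_pos hs, ← Fin.snoc_castSucc (α := fun _ => X) z y ⟨s + 1, hs⟩]
    rfl
  · have hlast : (⟨(s.castSucc : ℕ) + 1, by simp⟩ : Fin (t + 1)) = Fin.last t :=
      Fin.ext (by simp; omega)
    rw [dif_neg hs, hlast, Fin.snoc_last, Fin.val_castSucc]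

theorem chainProd_pos {X : Type*} {p : ℕ → X → X → ℝ} {t : ℕ} (hp : IsPositive t p) (x : X)
    (y : Fin t → X) : 0 < chainProd p t x y :=
  Finset.prod_pos fun s _ => hp s s.isLt _ _

section SoftValue

variable {X : Type*} [Fintype X] {p : ℕ → X → X → ℝ} {r : X → ℝ} {α : ℝ}

theorem sum_chainProd_succ (p : ℕ → X → X → ℝ) (t : ℕ) (x : X) (F : (Fin (t + 1) → X) → ℝ) :
    ∑ y, chainProd p (t + 1) x y * F y
      = ∑ z, p t x z * ∑ y, chainProd p t z y * F (Fin.snoc y z) := by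
  simp only [sum_pi_fin_succ_eq_sum_snoc, chainProd_snoc, Finset.mul_sum, mul_assoc]

theorem exp_softValue_succ_div (hα : α ≠ 0) {t : ℕ} (hp : IsPositive (t + 1) p) (x : X) :
    exp (softValue p r α (t + 1) x / α) = ∑ y, chainProd p (t + 1) x y * exp (r (y 0) / α) := by
  rw [softValue, mul_div_cancel_left₀ _ hα, exp_log]
  exact Finset.sum_pos (fun y _ => mul_pos (chainProd_pos hp x y) (exp_pos _))
    ⟨fun _ => x, Finset.mem_univ _⟩

theorem exp_softValue_succ (hα : α ≠ 0) {t : ℕ} (hp : IsPositive (t + 1) p) (x : X) :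
    exp (softValue p r α (t + 1) x / α) = ∑ z, p t x z * exp (softValue p r α t z / α) := by
  rw [exp_softValue_succ_div hα hp, sum_chainProd_succ]
  refine Finset.sum_congr rfl fun z _ => congrArg _ ?_
  cases t with
  | zero => simp [chainProd, softValue, Fin.snoc_zero]
  | succ t =>
    rw [exp_softValue_succ_div hα (hp.mono (t + 1).le_succ)]
    simp only [Fin.snoc_apply_zero]

theorem softOpt_pos {t : ℕ} {x y : X} (h : 0 < p t x y) : 0 < softOpt p r α t x y :=
  div_pos (mul_pos h (exp_pos _)) (exp_pos _)

theorem sum_softOpt (hα : α ≠ 0) {t : ℕ} (hp : IsPositive (t + 1) p) (x : X) :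
    ∑ y, softOpt p r α t x y = 1 := by
  simp only [softOpt]
  rw [← Finset.sum_div, ← exp_softValue_succ hα hp, div_self (exp_pos _).ne']

theorem isPositive_softOpt {T : ℕ} (hp : IsPositive T p) : IsPositive T (softOpt p r α) :=
  fun t ht x y => softOpt_pos (hp t ht x y)

theorem isPolicy_softOpt (hα : α ≠ 0) {T : ℕ} (hp : IsPositive T p) :
    IsPolicy T (softOpt p r α) :=
  fun t ht x => ⟨fun y => (softOpt_pos (hp t ht x y)).le, sum_softOpt hα (hp.mono ht) x⟩

end SoftValue

section Objective

variable {X : Type*} [Fintype X]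

noncomputable def klPenalty (T : ℕ) (μ : X → ℝ) (q p : ℕ → X → X → ℝ) : ℝ :=
  ∑ t : Fin T, trajExp μ q T (fun x =>
    KLd (fun y => q t (x t.succ) y) (fun y => p t (x t.succ) y))

theorem Jobj_eq_sub_klPenalty (T : ℕ) (μ : X → ℝ) (ppre : ℕ → X → X → ℝ) (r : X → ℝ) (α : ℝ)
    (q : ℕ → X → X → ℝ) :
    Jobj T μ ppre r α q = trajExp μ q T (fun x => r (x 0)) - α * klPenalty T μ q ppre :=
  rfl

theorem klPenalty_succ {S : ℕ} {μ : X → ℝ} {q : ℕ → X → X → ℝ} (hq : IsPolicy (S + 1) q)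
    (p : ℕ → X → X → ℝ) :
    klPenalty (S + 1) μ q p
      = klPenalty S (pushKernel μ (q S)) q p + ∑ z, μ z * KLd (q S z) (p S z) := by
  rw [klPenalty, Fin.sum_univ_castSucc]
  congr 1
  · refine Finset.sum_congr rfl fun t _ => trajExp_succ_of_snoc_eq fun y z => ?_
    simp only [Fin.succ_castSucc, Fin.snoc_castSucc, Fin.val_castSucc]
  · exact trajExp_succ_eq_sum_of_snoc_eq hq fun y z => by
      simp only [Fin.succ_last, Fin.snoc_last, Fin.val_last]

theorem klPenalty_nonneg {T : ℕ} {μ : X → ℝ} {q p : ℕ → X → X → ℝ} (hμ : ∀ x, 0 ≤ μ x)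
    (hq : IsPolicy T q) (hp : IsPolicy T p) (hpos : IsPositive T p) :
    0 ≤ klPenalty T μ q p :=
  Finset.sum_nonneg fun t _ => trajExp_nonneg hμ hq fun x =>
    KLd_nonneg (hq t t.isLt _).1 (hpos t t.isLt _) <| by
      rw [(hq t t.isLt _).2, (hp t t.isLt _).2]

theorem klPenalty_self {T : ℕ} (μ : X → ℝ) {q : ℕ → X → X → ℝ} (hq : IsPositive T q) :
    klPenalty T μ q q = 0 :=
  Finset.sum_eq_zero fun t _ => by
    simp [trajExp, KLd_self (hq t t.isLt _)]

theorem Jobj_succ {S : ℕ} {μ : X → ℝ} {q : ℕ → X → X → ℝ} (hq : IsPolicy (S + 1) q)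
    (ppre : ℕ → X → X → ℝ) (r : X → ℝ) (α : ℝ) :
    Jobj (S + 1) μ ppre r α q
      = Jobj S (pushKernel μ (q S)) ppre r α q - α * ∑ z, μ z * KLd (q S z) (ppre S z) := by
  rw [Jobj_eq_sub_klPenalty, Jobj_eq_sub_klPenalty, klPenalty_succ hq,
    trajExp_succ_of_snoc_eq (g := fun y => r (y 0)) fun y z => by rw [Fin.snoc_apply_zero]]
  ring

theorem Jobj_eq_sub_klPenalty_softOpt {r : X → ℝ} {α : ℝ} (hα : α ≠ 0) {T : ℕ}
    {ppre : ℕ → X → X → ℝ} (hp : IsPositive T ppre) {q : ℕ → X → X → ℝ} (hq : IsPolicy T q)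
    (μ : X → ℝ) :
    Jobj T μ ppre r α q
      = ∑ x, μ x * softValue ppre r α T x - α * klPenalty T μ q (softOpt ppre r α) := by
  induction T generalizing μ with
  | zero => simp [Jobj_eq_sub_klPenalty, klPenalty, trajExp_zero, softValue]
  | succ S ih =>
    have hstep : ∀ z, ∑ w, q S z w * softValue ppre r α S w - α * KLd (q S z) (ppre S z)
        = softValue ppre r α (S + 1) z - α * KLd (q S z) (softOpt ppre r α S z) := fun z =>
      sum_mul_sub_KLd_eq_sub_KLd_tilt hα (hp S S.lt_succ_self z) (hq S S.lt_succ_self z).1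
        (hq S S.lt_succ_self z).2 _ _
    have hsum := Finset.sum_congr rfl fun z (_ : z ∈ Finset.univ) => congrArg (μ z * ·) (hstep z)
    simp only [mul_sub, Finset.sum_sub_distrib, mul_left_comm (μ _) α, ← Finset.mul_sum] at hsum
    rw [Jobj_succ hq, ih (hp.mono S.le_succ) (hq.mono S.le_succ), klPenalty_succ hq,
      sum_pushKernel_mul]
    linear_combination hsum

end Objective

theorem statement10_general {X : Type*} [Fintype X]
    (T : ℕ) (r : X → ℝ) (α : ℝ) (hα : 0 < α)
    (ppre : ℕ → X → X → ℝ) (hprePos : IsPositive T ppre)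
    (μ : X → ℝ) (hμ0 : ∀ x, 0 ≤ μ x) :
    (∀ q : ℕ → X → X → ℝ, IsPolicy T q →
        Jobj T μ ppre r α q ≤ ∑ x, μ x * softValue ppre r α T x)
    ∧ Jobj T μ ppre r α (fun t x y => softOpt ppre r α t x y)
        = ∑ x, μ x * softValue ppre r α T x := by
  have hstar := isPolicy_softOpt (r := r) hα.ne' hprePos
  refine ⟨fun q hq => ?_, ?_⟩
  · rw [Jobj_eq_sub_klPenalty_softOpt hα.ne' hprePos hq]
    exact sub_le_self _ (mul_nonneg hα.le
      (klPenalty_nonneg hμ0 hq hstar (isPositive_softOpt hprePos)))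
  · rw [Jobj_eq_sub_klPenalty_softOpt hα.ne' hprePos hstar,
      klPenalty_self μ (isPositive_softOpt hprePos), mul_zero, sub_zero]

/-- `J(q) ≤ ∑_{x_T} μ(x_T) v_T(x_T)` for every policy sequence `q`,
and the soft-optimal policy sequence attains this bound, so `p*` maximizes the
entropy-regularized objective `J` over all policy sequences. -/
theorem statement10 {X : Type*} [Fintype X] [Nonempty X]
    (T : ℕ) (hT : 1 ≤ T) (r : X → ℝ) (α : ℝ) (hα : 0 < α)
    (ppre : ℕ → X → X → ℝ) (hpre : IsPolicy T ppre) (hprePos : IsPositive T ppre)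
    (μ : X → ℝ) (hμ0 : ∀ x, 0 ≤ μ x) (hμ1 : (∑ x, μ x) = 1) :
    (∀ q : ℕ → X → X → ℝ, IsPolicy T q →
        Jobj T μ ppre r α q ≤ ∑ x, μ x * softValue ppre r α T x)
    ∧ Jobj T μ ppre r α (fun t x y => softOpt ppre r α t x y)
        = ∑ x, μ x * softValue ppre r α T x :=
  statement10_general T r α hα ppre hprePos μ hμ0
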